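/- If u ∈ H¹(0,1) satisfies ∫₀¹ u(x) dx = 0, then sup_{x∈(0,1)} |u(x)| ≤ ‖u'‖_{L²(0,1)}. -/

import Mathlib

/-!
A continuous function with zero mean vanishes at some point `c` (mean value theorem for
integrals), so the fundamental theorem of calculus between `c` and `x` gives
`|u x| ≤ ∫₀¹ |u'|`. On an interval of length one this integral is an average, and Jensen's
inequality for the square bounds it by `(∫₀¹ u'²)^(1/2)`.
-/

open MeasureTheory Set intervalIntegral

theorem sq_intervalAverage_le_intervalAverage_sq {f : ℝ → ℝ} {a b : ℝ} (hab : a ≠ b)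
    (hf : IntervalIntegrable f volume a b)
    (hf2 : IntervalIntegrable (fun x => f x ^ 2) volume a b) :
    (⨍ x in a..b, f x) ^ 2 ≤ ⨍ x in a..b, f x ^ 2 :=
  even_two.convexOn_pow.map_set_average_le (continuous_pow 2).continuousOn isClosed_univ
    (by simpa using sub_ne_zero.mpr hab.symm) (by simp) (by simp) hf.def' hf2.def'

theorem abs_sub_le_integral_abs_deriv {f f' : ℝ → ℝ} {a b x y : ℝ}
    (hf : ∀ t ∈ Icc a b, HasDerivWithinAt f (f' t) (Icc a b) t)
    (hf' : IntervalIntegrable f' volume a b) (hx : x ∈ Icc a b) (hy : y ∈ Icc a b) :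
    |f x - f y| ≤ ∫ t in a..b, |f' t| := by
  wlog hyx : y ≤ x generalizing x y
  · rw [abs_sub_comm]; exact this hy hx (le_of_not_ge hyx)
  have hsub : Icc y x ⊆ Icc a b := Icc_subset_Icc hy.1 hx.2
  have hftc : ∫ t in y..x, f' t = f x - f y := by
    refine integral_eq_sub_of_hasDerivAt_of_le hyx
      (fun t ht => (hf t (hsub ht)).continuousWithinAt.mono hsub) (fun t ht => ?_)
      (hf'.mono_set (uIcc_subset_uIcc (Icc_subset_uIcc hy) (Icc_subset_uIcc hx)))
    exact (hf t (hsub (Ioo_subset_Icc_self ht))).hasDerivAt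
      (Filter.mem_of_superset (Ioo_mem_nhds ht.1 ht.2) (Ioo_subset_Icc_self.trans hsub))
  rw [← hftc]
  calc |∫ t in y..x, f' t| ≤ ∫ t in y..x, |f' t| := abs_integral_le_integral_abs hyx
    _ ≤ ∫ t in a..b, |f' t| :=
      integral_mono_interval hy.1 hyx hx.2 (.of_forall fun _ => abs_nonneg _) hf'.abs

theorem abs_le_integral_abs_deriv_of_integral_eq_zero {f f' : ℝ → ℝ} {a b x : ℝ} (hab : a < b)
    (hf : ∀ t ∈ Icc a b, HasDerivWithinAt f (f' t) (Icc a b) t)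
    (hf' : IntervalIntegrable f' volume a b) (hmean : ∫ t in a..b, f t = 0) (hx : x ∈ Icc a b) :
    |f x| ≤ ∫ t in a..b, |f' t| := by
  have hcont : ContinuousOn f (uIcc a b) := by
    rw [uIcc_of_le hab.le]; exact fun t ht => (hf t ht).continuousWithinAt
  obtain ⟨c, hc, hfc⟩ := exists_eq_interval_average hab.ne hcont
  rw [interval_average_eq_div, hmean, zero_div] at hfc
  rw [uIoo_of_le hab.le] at hc
  simpa [hfc] using abs_sub_le_integral_abs_deriv hf hf' hx (Ioo_subset_Icc_self hc)

/-- If `u ∈ H¹(0,1)` has zero mean on `(0,1)`, then `sup_{x∈(0,1)} |u(x)| ≤ ‖u'‖_{L²(0,1)}`. -/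
theorem sup_le_L2_deriv_of_zero_mean (u u' : ℝ → ℝ)
    (hu : ∀ x ∈ Set.Icc (0 : ℝ) 1, HasDerivWithinAt u (u' x) (Set.Icc 0 1) x)
    (hu'int : IntervalIntegrable u' volume 0 1)
    (hu'L2 : IntervalIntegrable (fun x => (u' x) ^ 2) volume 0 1)
    (hmean : (∫ x in (0 : ℝ)..1, u x) = 0) :
    ∀ x ∈ Set.Ioo (0 : ℝ) 1, |u x| ≤ Real.sqrt (∫ y in (0 : ℝ)..1, (u' y) ^ 2) := by
  intro x hx
  have integral_eq_average (g : ℝ → ℝ) : ∫ y in (0 : ℝ)..1, g y = ⨍ y in (0 : ℝ)..1, g y := by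
    rw [interval_average_eq]; simp
  have hjensen := sq_intervalAverage_le_intervalAverage_sq zero_ne_one hu'int.abs
    (by simpa only [sq_abs] using hu'L2)
  simp only [sq_abs, ← integral_eq_average] at hjensen
  exact (abs_le_integral_abs_deriv_of_integral_eq_zero one_pos hu hu'int hmean
    (Ioo_subset_Icc_self hx)).trans (Real.le_sqrt_of_sq_le hjensen)
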